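/- Suppose S = I_m, C₊ = −C₋, and Ω₊ = −Ω₋ (with Ω₋ Hermitian and Ω₊ symmetric), which is the p-coupling case of the QND-interaction condition. Then the quadrature state-space matrices have the explicit forms C = 2·[[0, −Im(C₋)],[0, Re(C₋)]], B = 2·[[−Re(C₋†), Im(C₋†)],[0, 0]], and A = 2·[[0, Re(Ω₋) + Re(C₋†)Im(C₋) + Im(C₋†)Re(C₋)],[0, Im(Ω₋)]]. Consequently: (i) [0 I_n]·Aᵏ·B = 0 for all integers k ≥ 0, i.e., the phase quadratures p are uncontrollable (they evolve autonomously, so that p is a QND variable whenever the corresponding subsystem is observable); and (ii) for every s ∈ ℂ with sI_{2n} − A invertible, G[s] = I_{2m}, so in particular G_qp[s] = 0 and G_pq[s] = 0, realizing the BAE measurements of q_out with respect to p_in and of p_out with respect to q_in. -/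

import Mathlib

open Matrix

noncomputable section

namespace LQS

/-- Entrywise real part, as a complex matrix. -/
def matRe {k l : ℕ} (X : Matrix (Fin k) (Fin l) ℂ) : Matrix (Fin k) (Fin l) ℂ :=
  fun i j => ((X i j).re : ℂ)

/-- Entrywise imaginary part, as a complex matrix. -/
def matIm {k l : ℕ} (X : Matrix (Fin k) (Fin l) ℂ) : Matrix (Fin k) (Fin l) ℂ :=
  fun i j => ((X i j).im : ℂ)

/-- A complex matrix has real entries. -/
def isReal {k l : ℕ} (X : Matrix (Fin k) (Fin l) ℂ) : Prop := ∀ i j, (X i j).im = 0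

/-- A complex matrix is purely imaginary (every entry has zero real part). -/
def isPurelyImag {k l : ℕ} (X : Matrix (Fin k) (Fin l) ℂ) : Prop := ∀ i j, (X i j).re = 0

/-- The symplectic matrix J_k = [[0, I],[−I, 0]]. -/
def Jmat (k : ℕ) : Matrix (Fin k ⊕ Fin k) (Fin k ⊕ Fin k) ℂ :=
  fromBlocks 0 1 (-1) 0

/-- D = [[Re S, −Im S],[Im S, Re S]]. -/
def quadD {m : ℕ} (S : Matrix (Fin m) (Fin m) ℂ) :
    Matrix (Fin m ⊕ Fin m) (Fin m ⊕ Fin m) ℂ :=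
  fromBlocks (matRe S) (-(matIm S)) (matIm S) (matRe S)

/-- C = [[Re(C₋+C₊), −Im(C₋−C₊)],[Im(C₋+C₊), Re(C₋−C₊)]]. -/
def quadC {m n : ℕ} (Cm Cp : Matrix (Fin m) (Fin n) ℂ) :
    Matrix (Fin m ⊕ Fin m) (Fin n ⊕ Fin n) ℂ :=
  fromBlocks (matRe (Cm + Cp)) (-(matIm (Cm - Cp))) (matIm (Cm + Cp)) (matRe (Cm - Cp))

/-- B = −[[Re((C₋−C₊)†), −Im((C₋−C₊)†)],[Im((C₋+C₊)†), Re((C₋+C₊)†)]]·D. -/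
def quadB {m n : ℕ} (S : Matrix (Fin m) (Fin m) ℂ) (Cm Cp : Matrix (Fin m) (Fin n) ℂ) :
    Matrix (Fin n ⊕ Fin n) (Fin m ⊕ Fin m) ℂ :=
  -(fromBlocks (matRe (Cm - Cp)ᴴ) (-(matIm (Cm - Cp)ᴴ))
      (matIm (Cm + Cp)ᴴ) (matRe (Cm + Cp)ᴴ)) * quadD S

/-- JH = [[Im(Ω₋+Ω₊), Re(Ω₋−Ω₊)],[−Re(Ω₋+Ω₊), Im(Ω₋−Ω₊)]]. -/
def quadJH {n : ℕ} (Om Op : Matrix (Fin n) (Fin n) ℂ) :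
    Matrix (Fin n ⊕ Fin n) (Fin n ⊕ Fin n) ℂ :=
  fromBlocks (matIm (Om + Op)) (matRe (Om - Op)) (-(matRe (Om + Op))) (matIm (Om - Op))

/-- C♯ = −J_n·Cᵀ·J_m. -/
def quadCsharp {m n : ℕ} (Cm Cp : Matrix (Fin m) (Fin n) ℂ) :
    Matrix (Fin n ⊕ Fin n) (Fin m ⊕ Fin m) ℂ :=
  -(Jmat n) * (quadC Cm Cp)ᵀ * (Jmat m)

/-- A = JH − (1/2)·C♯·C. -/
def quadA {m n : ℕ} (Cm Cp : Matrix (Fin m) (Fin n) ℂ) (Om Op : Matrix (Fin n) (Fin n) ℂ) :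
    Matrix (Fin n ⊕ Fin n) (Fin n ⊕ Fin n) ℂ :=
  quadJH Om Op - (1/2 : ℂ) • (quadCsharp Cm Cp * quadC Cm Cp)

/-- Transfer matrix G[s] = D + C(sI − A)⁻¹B. -/
def transferG {m n : ℕ} (S : Matrix (Fin m) (Fin m) ℂ) (Cm Cp : Matrix (Fin m) (Fin n) ℂ)
    (Om Op : Matrix (Fin n) (Fin n) ℂ) (s : ℂ) :
    Matrix (Fin m ⊕ Fin m) (Fin m ⊕ Fin m) ℂ :=
  quadD S + quadC Cm Cp *
    (s • (1 : Matrix (Fin n ⊕ Fin n) (Fin n ⊕ Fin n) ℂ) - quadA Cm Cp Om Op)⁻¹ *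
    quadB S Cm Cp

end LQS

open LQS Matrix

namespace LQSAux
open LQS Matrix

variable {m n : ℕ}

lemma matRe_ct (X : Matrix (Fin m) (Fin n) ℂ) : matRe Xᴴ = (matRe X)ᵀ := by
  ext i j; simp [matRe, matIm, conjTranspose_apply]

lemma matIm_ct (X : Matrix (Fin m) (Fin n) ℂ) : matIm Xᴴ = -(matIm X)ᵀ := by
  ext i j; simp [matIm, conjTranspose_apply]

lemma hC (Cm : Matrix (Fin m) (Fin n) ℂ) :
    quadC Cm (-Cm) = (2:ℂ) • fromBlocks 0 (-(matIm Cm)) 0 (matRe Cm) := by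
  ext (i|i) (j|j) <;> simp [quadC, matRe, matIm, fromBlocks] <;> ring

lemma hD : quadD (1 : Matrix (Fin m) (Fin m) ℂ) = 1 := by
  have h1 : matRe (1 : Matrix (Fin m) (Fin m) ℂ) = 1 := by
    ext i j; simp [matRe, Matrix.one_apply]; split <;> simp
  have h2 : matIm (1 : Matrix (Fin m) (Fin m) ℂ) = 0 := by
    ext i j; simp [matIm, Matrix.one_apply]; split <;> simp
  rw [quadD, h1, h2]; simp [fromBlocks_one]

lemma hB (Cm : Matrix (Fin m) (Fin n) ℂ) :
    quadB (1 : Matrix (Fin m) (Fin m) ℂ) Cm (-Cm)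
      = (2 : ℂ) • fromBlocks (-(matRe Cmᴴ)) (matIm Cmᴴ) 0 0 := by
  rw [quadB, hD, Matrix.mul_one]
  ext (i|i) (j|j) <;>
    simp [fromBlocks, matRe, matIm, conjTranspose_apply] <;> ring

lemma hJH (Om : Matrix (Fin n) (Fin n) ℂ) :
    quadJH Om (-Om) = (2:ℂ) • fromBlocks 0 (matRe Om) 0 (matIm Om) := by
  ext (i|i) (j|j) <;> simp [quadJH, matRe, matIm, fromBlocks] <;> ring

lemma hCsharp (Cm : Matrix (Fin m) (Fin n) ℂ) :
    quadCsharp Cm (-Cm) = (2:ℂ) • fromBlocks (matRe Cmᴴ) (-(matIm Cmᴴ)) 0 0 := by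
  rw [quadCsharp, hC]
  simp only [Jmat, transpose_smul, fromBlocks_transpose, transpose_zero, transpose_neg,
    Matrix.neg_mul, Matrix.mul_neg, Matrix.mul_smul, Matrix.smul_mul, fromBlocks_neg,
    fromBlocks_multiply, matRe_ct, matIm_ct, Matrix.mul_zero, Matrix.zero_mul,
    Matrix.mul_one, Matrix.one_mul, add_zero, zero_add, neg_zero, neg_neg, smul_neg]

lemma hA (Cm : Matrix (Fin m) (Fin n) ℂ) (Om : Matrix (Fin n) (Fin n) ℂ) :
    quadA Cm (-Cm) Om (-Om)
      = (2 : ℂ) • fromBlocks 0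
          (matRe Om + matRe Cmᴴ * matIm Cm + matIm Cmᴴ * matRe Cm) 0 (matIm Om) := by
  rw [quadA, hJH, hCsharp, hC]
  simp only [Matrix.mul_smul, Matrix.smul_mul, fromBlocks_multiply, smul_smul]
  norm_num
  rw [← smul_sub]
  congr 1
  ext (i|i) (j|j) <;> simp [fromBlocks, Matrix.sub_apply, Matrix.mul_neg, Matrix.neg_mul] <;> ring

lemma hEB (Cm : Matrix (Fin m) (Fin n) ℂ) :
    (fromCols 0 1 : Matrix (Fin n) (Fin n ⊕ Fin n) ℂ)
      * quadB (1 : Matrix (Fin m) (Fin m) ℂ) Cm (-Cm) = 0 := by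
  rw [hB, Matrix.mul_smul, fromCols_mul_fromBlocks]
  simp [fromCols_zero]

lemma hEA (Cm : Matrix (Fin m) (Fin n) ℂ) (Om : Matrix (Fin n) (Fin n) ℂ) :
    (fromCols 0 1 : Matrix (Fin n) (Fin n ⊕ Fin n) ℂ) * quadA Cm (-Cm) Om (-Om)
      = ((2:ℂ) • matIm Om) * (fromCols 0 1 : Matrix (Fin n) (Fin n ⊕ Fin n) ℂ) := by
  rw [hA, Matrix.mul_smul, fromCols_mul_fromBlocks, Matrix.smul_mul, mul_fromCols]
  simp

lemma hCfact (Cm : Matrix (Fin m) (Fin n) ℂ) :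
    quadC Cm (-Cm) = (fromRows (-((2:ℂ) • matIm Cm)) ((2:ℂ) • matRe Cm))
      * (fromCols 0 1 : Matrix (Fin n) (Fin n ⊕ Fin n) ℂ) := by
  rw [hC, fromRows_mul_fromCols]
  simp [fromBlocks_smul]

lemma hMblock (Cm : Matrix (Fin m) (Fin n) ℂ) (Om : Matrix (Fin n) (Fin n) ℂ) (s : ℂ) :
    s • (1 : Matrix (Fin n ⊕ Fin n) (Fin n ⊕ Fin n) ℂ) - quadA Cm (-Cm) Om (-Om)
      = fromBlocks (s • (1 : Matrix (Fin n) (Fin n) ℂ))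
          (-((2:ℂ) • (matRe Om + matRe Cmᴴ * matIm Cm + matIm Cmᴴ * matRe Cm))) 0
          (s • (1 : Matrix (Fin n) (Fin n) ℂ) - (2:ℂ) • matIm Om) := by
  rw [hA, ← fromBlocks_one, fromBlocks_smul, fromBlocks_smul, sub_eq_add_neg,
    fromBlocks_neg, fromBlocks_add]
  simp [sub_eq_add_neg]

end LQSAux

/-- p-coupling QND case (S = I, C₊ = −C₋, Ω₊ = −Ω₋): explicit state-space
matrices, uncontrollability of the p quadratures, and G[s] = I. -/
theorem stmt_16 {m n : ℕ} (hm : 1 ≤ m) (hn : 1 ≤ n)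
    (Cm : Matrix (Fin m) (Fin n) ℂ) (Om : Matrix (Fin n) (Fin n) ℂ)
    (hOmH : Omᴴ = Om) (hOpS : (-Om)ᵀ = -Om) :
    quadC Cm (-Cm) = (2 : ℂ) • fromBlocks 0 (-(matIm Cm)) 0 (matRe Cm) ∧
    quadB (1 : Matrix (Fin m) (Fin m) ℂ) Cm (-Cm)
      = (2 : ℂ) • fromBlocks (-(matRe Cmᴴ)) (matIm Cmᴴ) 0 0 ∧
    quadA Cm (-Cm) Om (-Om)
      = (2 : ℂ) • fromBlocks 0
          (matRe Om + matRe Cmᴴ * matIm Cm + matIm Cmᴴ * matRe Cm) 0 (matIm Om) ∧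
    (∀ k : ℕ, (fromCols 0 1 : Matrix (Fin n) (Fin n ⊕ Fin n) ℂ)
      * (quadA Cm (-Cm) Om (-Om)) ^ k
      * quadB (1 : Matrix (Fin m) (Fin m) ℂ) Cm (-Cm) = 0) ∧
    (∀ s : ℂ,
      IsUnit (s • (1 : Matrix (Fin n ⊕ Fin n) (Fin n ⊕ Fin n) ℂ) - quadA Cm (-Cm) Om (-Om)) →
      transferG (1 : Matrix (Fin m) (Fin m) ℂ) Cm (-Cm) Om (-Om) s = 1) := by
  refine ⟨LQSAux.hC Cm, LQSAux.hB Cm, LQSAux.hA Cm Om, ?_, ?_⟩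
  · intro k
    induction k with
    | zero => simpa using LQSAux.hEB Cm
    | succ k ih =>
      rw [pow_succ', ← Matrix.mul_assoc, LQSAux.hEA Cm Om, Matrix.mul_assoc,
        Matrix.mul_assoc]
      rw [Matrix.mul_assoc] at ih
      rw [ih, Matrix.mul_zero]
  · intro s hu
    set E : Matrix (Fin n) (Fin n ⊕ Fin n) ℂ := fromCols 0 1 with hE
    set M := s • (1 : Matrix (Fin n ⊕ Fin n) (Fin n ⊕ Fin n) ℂ) - quadA Cm (-Cm) Om (-Om)
      with hMdef
    set R := s • (1 : Matrix (Fin n) (Fin n) ℂ) - (2:ℂ) • matIm Om with hRdef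
    have hdetM : IsUnit M.det := (Matrix.isUnit_iff_isUnit_det M).mp hu
    have hdetR : IsUnit R.det := by
      have : M.det = (s • (1 : Matrix (Fin n) (Fin n) ℂ)).det * R.det := by
        rw [hMdef, LQSAux.hMblock, det_fromBlocks_zero₂₁]
      rw [this] at hdetM
      exact (IsUnit.mul_iff.mp hdetM).2
    have hEM : E * M = R * E := by
      rw [hMdef, hRdef, Matrix.mul_sub, Matrix.sub_mul, LQSAux.hEA Cm Om,
        Matrix.mul_smul, Matrix.mul_one, Matrix.smul_mul, Matrix.smul_mul, Matrix.one_mul]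
    have hEMi : E * M⁻¹ = R⁻¹ * E := by
      have h1 : R⁻¹ * (E * M) * M⁻¹ = R⁻¹ * (R * E) * M⁻¹ := by rw [hEM]
      have h2 : R⁻¹ * (E * M) * M⁻¹ = R⁻¹ * E := by
        rw [Matrix.mul_assoc R⁻¹ (E * M) M⁻¹, Matrix.mul_assoc E M M⁻¹,
          Matrix.mul_nonsing_inv M hdetM, Matrix.mul_one]
      have h3 : R⁻¹ * (R * E) * M⁻¹ = E * M⁻¹ := by
        rw [← Matrix.mul_assoc R⁻¹ R E, Matrix.nonsing_inv_mul R hdetR, Matrix.one_mul]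
      rw [← h2, h1, h3]
    have hEB' : E * quadB (1 : Matrix (Fin m) (Fin m) ℂ) Cm (-Cm) = 0 := by
      rw [hE]; exact LQSAux.hEB Cm
    have hzero : quadC Cm (-Cm) * M⁻¹ * quadB (1 : Matrix (Fin m) (Fin m) ℂ) Cm (-Cm) = 0 := by
      rw [LQSAux.hCfact Cm, ← hE, Matrix.mul_assoc _ E M⁻¹, hEMi, ← Matrix.mul_assoc,
        Matrix.mul_assoc _ E, hEB', Matrix.mul_zero]
    rw [transferG, ← hMdef, hzero, add_zero, LQSAux.hD]
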